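/- arXiv:2412.16054 — 3 statements merged into one kernel-verified Lean document; each statement's English description precedes it below -/
import Mathlib

section
/- Let m ≥ 1, let q > −1 be real, let u = (u_1,…,u_m) ∈ S^{m−1}, let i ∈ {1,…,m}, and let g = (g_1,…,g_m) be a standard Gaussian random vector in ℝ^m. Then E[ |⟨g,u⟩|^q · g_i² ] = (1 + q u_i²) · 2^{q/2} Γ((q+1)/2) / √π, i.e. it equals (1 + q u_i²) · E[|g_1|^q]. -/
/-!
Write `X = ⟪u, g⟫`, which is standard Gaussian, and `g_i = u_i X + Y` with `Y = ⟪e_i - u_i u, g⟫`.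
The pair `(X, Y)` is Gaussian and uncorrelated, hence independent, with `E Y = 0` and
`E Y² = 1 - u_i²`. Expanding the square, the cross term vanishes and
`E[|X|^q g_i²] = u_i² E|X|^(q+2) + (1 - u_i²) E|X|^q`, while `E|X|^(q+2) = (q + 1) E|X|^q`
by `Γ(s + 1) = s Γ(s)`. The absolute moment `E|X|^q = 2^(q/2) Γ((q+1)/2) / √π` is the substitution
`t = x² / 2` in the Gaussian density.
-/

open MeasureTheory ProbabilityTheory Real Set
open scoped RealInnerProductSpace

lemma integrable_comp_abs_of_integrableOn_Ioi {f : ℝ → ℝ} (hf : IntegrableOn f (Ioi 0)) :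
    Integrable fun x ↦ f |x| := by
  have hIoi : IntegrableOn (fun x ↦ f |x|) (Ioi 0) :=
    hf.congr_fun (fun x hx ↦ by rw [abs_of_pos hx]) measurableSet_Ioi
  have hIic : IntegrableOn (fun x ↦ f |x|) (Iic 0) := by
    rw [← (Measure.measurePreserving_neg (volume : Measure ℝ)).integrableOn_comp_preimage
      (Homeomorph.neg ℝ).measurableEmbedding]
    simpa [Function.comp_def, integrableOn_Ici_iff_integrableOn_Ioi] using hIoi
  rw [← integrableOn_univ, ← Iic_union_Ioi (a := (0 : ℝ))]
  exact hIic.union hIoi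

lemma abs_rpow_mul_sq {q : ℝ} (hq : -2 < q) (x : ℝ) : |x| ^ q * x ^ 2 = |x| ^ (q + 2) := by
  rcases eq_or_ne x 0 with rfl | hx
  · simp [zero_rpow (by linarith : q + 2 ≠ 0)]
  · rw [rpow_add (abs_pos.mpr hx), rpow_two, sq_abs]

lemma abs_abs_rpow_mul {q : ℝ} (hq : -1 < q) (x : ℝ) : |(|x| ^ q * x)| = |x| ^ (q + 1) := by
  rcases eq_or_ne x 0 with rfl | hx
  · simp [zero_rpow (by linarith : q + 1 ≠ 0)]
  · rw [abs_mul, abs_of_nonneg (by positivity), rpow_add_one (abs_pos.mpr hx).ne']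

namespace ProbabilityTheory

lemma gaussianPDFReal_zero_one (x : ℝ) :
    gaussianPDFReal 0 1 x = (√(2 * π))⁻¹ * rexp (-(1 / 2) * x ^ 2) := by
  simp only [gaussianPDFReal, NNReal.coe_one, mul_one, sub_zero]
  ring_nf

lemma integrable_gaussianReal_iff {f : ℝ → ℝ} :
    Integrable f (gaussianReal 0 1) ↔ Integrable fun x ↦ gaussianPDFReal 0 1 x * f x := by
  rw [gaussianReal_of_var_ne_zero 0 one_ne_zero, integrable_withDensity_iff_integrable_smul'
    (measurable_gaussianPDF 0 1) (ae_of_all _ fun _ ↦ gaussianPDF_lt_top)]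
  simp [gaussianPDF, ENNReal.toReal_ofReal (gaussianPDFReal_nonneg 0 1 _)]

lemma integrable_abs_rpow_gaussianReal {r : ℝ} (hr : -1 < r) :
    Integrable (fun x ↦ |x| ^ r) (gaussianReal 0 1) := by
  rw [integrable_gaussianReal_iff]
  have := (integrableOn_rpow_mul_exp_neg_mul_sq (by norm_num : (0 : ℝ) < 1 / 2) hr).const_mul
    (√(2 * π))⁻¹
  refine (integrable_comp_abs_of_integrableOn_Ioi this).congr (.of_forall fun x ↦ ?_)
  simp only [gaussianPDFReal_zero_one, sq_abs]
  ring

lemma integral_abs_rpow_gaussianReal {r : ℝ} (hr : -1 < r) :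
    ∫ x, |x| ^ r ∂gaussianReal 0 1 = 2 ^ (r / 2) * Gamma ((r + 1) / 2) / √π := by
  have h := integral_comp_abs (f := fun x ↦ x ^ r * rexp (-(1 / 2) * x ^ 2))
  simp only [sq_abs] at h
  simp_rw [integral_gaussianReal_eq_integral_smul one_ne_zero, smul_eq_mul,
    gaussianPDFReal_zero_one, mul_assoc, mul_comm _ (|_| ^ r)]
  rw [integral_const_mul, h]
  simp_rw [← rpow_two]
  rw [integral_rpow_mul_exp_neg_mul_rpow two_pos hr (by norm_num)]
  have h2 : (1 / 2 : ℝ) ^ (-(r + 1) / 2) = 2 ^ (r / 2) * 2 ^ (1 / 2 : ℝ) := by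
    rw [one_div, inv_rpow zero_le_two, ← rpow_neg zero_le_two, ← rpow_add two_pos]
    ring_nf
  have hsqrt : √(2 * π) = 2 ^ (1 / 2 : ℝ) * √π := by
    rw [sqrt_mul zero_le_two, sqrt_eq_rpow]
  have : (0 : ℝ) < 2 ^ (1 / 2 : ℝ) := by positivity
  have : 0 < √π := by positivity
  rw [h2, hsqrt]
  field_simp

lemma integral_abs_rpow_mul_sq_gaussianReal {q : ℝ} (hq : -1 < q) :
    ∫ x, |x| ^ q * x ^ 2 ∂gaussianReal 0 1 = (q + 1) * ∫ x, |x| ^ q ∂gaussianReal 0 1 := by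
  simp_rw [abs_rpow_mul_sq (by linarith : -2 < q)]
  rw [integral_abs_rpow_gaussianReal (by linarith), integral_abs_rpow_gaussianReal hq,
    show (q + 2 + 1) / 2 = (q + 1) / 2 + 1 by ring, Gamma_add_one (by linarith),
    show (q + 2) / 2 = q / 2 + 1 by ring, rpow_add_one two_ne_zero]
  ring

lemma integrable_abs_rpow_mul_sq_gaussianReal {q : ℝ} (hq : -1 < q) :
    Integrable (fun x ↦ |x| ^ q * x ^ 2) (gaussianReal 0 1) := by
  simp_rw [abs_rpow_mul_sq (by linarith : -2 < q)]
  exact integrable_abs_rpow_gaussianReal (by linarith)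

lemma integrable_abs_rpow_mul_self_gaussianReal {q : ℝ} (hq : -1 < q) :
    Integrable (fun x ↦ |x| ^ q * x) (gaussianReal 0 1) := by
  refine (integrable_abs_rpow_gaussianReal (by linarith : -1 < q + 1)).mono' (by fun_prop)
    (.of_forall fun x ↦ ?_)
  rw [norm_eq_abs, abs_abs_rpow_mul hq]

lemma HasLaw.integrable_comp {Ω 𝓧 F : Type*} {mΩ : MeasurableSpace Ω} {m𝓧 : MeasurableSpace 𝓧}
    [NormedAddCommGroup F] {P : Measure Ω} {μ : Measure 𝓧} {X : Ω → 𝓧} (hX : HasLaw X μ P)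
    {f : 𝓧 → F} (hf : Integrable f μ) : Integrable (f ∘ X) P :=
  (hX.map_eq ▸ hf).comp_aemeasurable hX.aemeasurable

lemma integral_abs_rpow_mul_add_sq_of_indepFun {Ω : Type*} {mΩ : MeasurableSpace Ω}
    {P : Measure Ω} {q : ℝ} (hq : -1 < q) {X Y : Ω → ℝ}
    (hX : HasLaw X (gaussianReal 0 1) P) (hY : MemLp Y 2 P) (hY0 : ∫ ω, Y ω ∂P = 0)
    (hXY : IndepFun X Y P) (c : ℝ) :
    ∫ ω, |X ω| ^ q * (c * X ω + Y ω) ^ 2 ∂P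
      = (c ^ 2 * (q + 1) + ∫ ω, Y ω ^ 2 ∂P) * ∫ x, |x| ^ q ∂gaussianReal 0 1 := by
  have := hX.isProbabilityMeasure
  have hXm := hX.aemeasurable
  have hYm := hY.aestronglyMeasurable.aemeasurable
  have hlawInt {f : ℝ → ℝ} (hf : Measurable f) :
      ∫ ω, f (X ω) ∂P = ∫ x, f x ∂gaussianReal 0 1 :=
    hX.integral_comp hf.aestronglyMeasurable
  have hint₂ : Integrable (fun ω ↦ |X ω| ^ q * X ω ^ 2) P :=
    hX.integrable_comp (integrable_abs_rpow_mul_sq_gaussianReal hq)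
  have hint₁ : Integrable (fun ω ↦ |X ω| ^ q * X ω * Y ω) P :=
    (hXY.comp (φ := fun x ↦ |x| ^ q * x) (ψ := id) (by fun_prop) measurable_id).integrable_mul
      (hX.integrable_comp (integrable_abs_rpow_mul_self_gaussianReal hq))
      (hY.integrable one_le_two)
  have hint₀ : Integrable (fun ω ↦ |X ω| ^ q * Y ω ^ 2) P :=
    (hXY.comp (φ := fun x ↦ |x| ^ q) (ψ := (· ^ 2)) (by fun_prop) (by fun_prop)).integrable_mul
      (hX.integrable_comp (integrable_abs_rpow_gaussianReal hq)) hY.integrable_sq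
  have hcross : ∫ ω, |X ω| ^ q * X ω * Y ω ∂P = (∫ ω, |X ω| ^ q * X ω ∂P) * ∫ ω, Y ω ∂P :=
    hXY.integral_fun_comp_mul_comp (f := fun x ↦ |x| ^ q * x) (g := id) hXm hYm
      (by fun_prop) aestronglyMeasurable_id
  have hsq : ∫ ω, |X ω| ^ q * Y ω ^ 2 ∂P = (∫ ω, |X ω| ^ q ∂P) * ∫ ω, Y ω ^ 2 ∂P :=
    hXY.integral_fun_comp_mul_comp (f := fun x ↦ |x| ^ q) (g := (· ^ 2)) hXm hYm
      (Measurable.aestronglyMeasurable (by fun_prop)) (by fun_prop)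
  calc ∫ ω, |X ω| ^ q * (c * X ω + Y ω) ^ 2 ∂P
      = ∫ ω, c ^ 2 * (|X ω| ^ q * X ω ^ 2) + (2 * c * (|X ω| ^ q * X ω * Y ω)
          + |X ω| ^ q * Y ω ^ 2) ∂P := by congr with ω; ring
    _ = c ^ 2 * ∫ ω, |X ω| ^ q * X ω ^ 2 ∂P + (2 * c * ∫ ω, |X ω| ^ q * X ω * Y ω ∂P
          + ∫ ω, |X ω| ^ q * Y ω ^ 2 ∂P) := by
      rw [integral_add, integral_add, integral_const_mul, integral_const_mul]
      exacts [hint₁.const_mul _, hint₀, hint₂.const_mul _, (hint₁.const_mul _).add hint₀]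
    _ = _ := by
      rw [hcross, hsq, hY0, hlawInt (f := fun x ↦ |x| ^ q * x ^ 2) (by fun_prop),
        hlawInt (f := fun x ↦ |x| ^ q) (by fun_prop), integral_abs_rpow_mul_sq_gaussianReal hq]
      ring

section stdGaussian

variable {E : Type*} [NormedAddCommGroup E] [InnerProductSpace ℝ E] [FiniteDimensional ℝ E]
  [MeasurableSpace E] [BorelSpace E]

lemma hasLaw_inner_stdGaussian (a : E) :
    HasLaw (⟪a, ·⟫) (gaussianReal 0 (‖a‖₊ ^ 2)) (stdGaussian E) where
  map_eq := by
    have := IsGaussian.map_eq_gaussianReal (μ := stdGaussian E) (innerSL ℝ a)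
    rwa [integral_strongDual_stdGaussian, variance_dual_stdGaussian, innerSL_apply_norm,
      ← coe_nnnorm, ← NNReal.coe_pow, Real.toNNReal_coe] at this

lemma integral_inner_sq_stdGaussian (a : E) : ∫ x, ⟪a, x⟫ ^ 2 ∂stdGaussian E = ‖a‖ ^ 2 := by
  have h0 : ∫ x, ⟪a, x⟫ ∂stdGaussian E = 0 := integral_strongDual_stdGaussian (innerSL ℝ a)
  rw [← variance_of_integral_eq_zero (by fun_prop) h0, ← innerSL_apply_norm ℝ a,
    ← variance_dual_stdGaussian]
  rfl

lemma indepFun_inner_stdGaussian {a b : E} (hab : ⟪a, b⟫ = 0) :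
    IndepFun (⟪a, ·⟫) (⟪b, ·⟫) (stdGaussian E) := by
  refine HasGaussianLaw.indepFun_of_covariance_eq_zero ?_ ?_
  · exact IsGaussian.hasGaussianLaw_id.map_fun ((innerSL ℝ a).prod (innerSL ℝ b))
  · rw [← covarianceBilin_apply_eq_cov IsGaussian.memLp_two_id, covarianceBilin_stdGaussian]
    exact hab

theorem integral_abs_inner_rpow_mul_inner_sq_stdGaussian {q : ℝ} (hq : -1 < q) {u : E}
    (hu : ‖u‖ = 1) (v : E) :
    ∫ x, |⟪u, x⟫| ^ q * ⟪v, x⟫ ^ 2 ∂stdGaussian E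
      = (‖v‖ ^ 2 + q * ⟪u, v⟫ ^ 2) * ∫ t, |t| ^ q ∂gaussianReal 0 1 := by
  set c := ⟪u, v⟫
  set w := v - c • u
  have huw : ⟪u, w⟫ = 0 := by simp [w, inner_sub_right, inner_smul_right, hu, c]
  have hw : ‖w‖ ^ 2 = ‖v‖ ^ 2 - c ^ 2 := by
    rw [norm_sub_sq_real, inner_smul_right, norm_smul, hu, real_inner_comm, norm_eq_abs, mul_one,
      sq_abs]
    ring
  have hX : HasLaw (⟪u, ·⟫) (gaussianReal 0 1) (stdGaussian E) := by
    have h := hasLaw_inner_stdGaussian u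
    rwa [show ‖u‖₊ ^ 2 = 1 by ext; simp [hu]] at h
  have hY : MemLp (⟪w, ·⟫) 2 (stdGaussian E) := IsGaussian.memLp_dual _ (innerSL ℝ w) 2 (by simp)
  have hY0 : ∫ x, ⟪w, x⟫ ∂stdGaussian E = 0 := integral_strongDual_stdGaussian (innerSL ℝ w)
  have hv (x : E) : ⟪v, x⟫ = c * ⟪u, x⟫ + ⟪w, x⟫ := by simp [w, inner_sub_left, inner_smul_left]
  simp_rw [hv]
  rw [integral_abs_rpow_mul_add_sq_of_indepFun hq hX hY hY0 (indepFun_inner_stdGaussian huw) c,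
    integral_inner_sq_stdGaussian, hw]
  ring

end stdGaussian

end ProbabilityTheory

theorem gaussian_power_times_square_moment_general (m : ℕ) (q : ℝ) (hq : -1 < q)
    (u : Fin m → ℝ) (hu : ∑ j, u j ^ 2 = 1) (i : Fin m) :
    ∫ g : Fin m → ℝ,
        |∑ j, g j * u j| ^ q * (g i) ^ 2
        ∂(Measure.pi fun _ : Fin m => gaussianReal 0 1) =
      (1 + q * u i ^ 2) * (2 ^ (q / 2) * Real.Gamma ((q + 1) / 2) / Real.sqrt Real.pi) := by
  set U : EuclideanSpace ℝ (Fin m) := WithLp.toLp 2 u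
  set e : EuclideanSpace ℝ (Fin m) := EuclideanSpace.single i 1
  have hU : ‖U‖ = 1 := by simp [U, EuclideanSpace.norm_eq, hu]
  have hUe : ⟪U, e⟫ = u i := by simp [U, e, EuclideanSpace.inner_single_right]
  have hpt (g : Fin m → ℝ) : |∑ j, g j * u j| ^ q * g i ^ 2
      = |⟪U, WithLp.toLp 2 g⟫| ^ q * ⟪e, WithLp.toLp 2 g⟫ ^ 2 := by
    simp [U, e, PiLp.inner_apply, mul_comm]
  simp_rw [hpt]
  rw [← integral_map (φ := WithLp.toLp 2) (f := fun x ↦ |⟪U, x⟫| ^ q * ⟪e, x⟫ ^ 2) (by fun_prop)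
      (Measurable.aestronglyMeasurable (by fun_prop)), map_pi_eq_stdGaussian,
    integral_abs_inner_rpow_mul_inner_sq_stdGaussian hq hU, integral_abs_rpow_gaussianReal hq, hUe]
  simp [e]

/-- For `u ∈ S^{m−1}`, `q > −1` and a standard Gaussian vector `g` in `ℝ^m`,
`E[|⟨g,u⟩|^q g_i²] = (1 + q u_i²) · 2^{q/2} Γ((q+1)/2)/√π`. -/
theorem gaussian_power_times_square_moment (m : ℕ) (hm : 1 ≤ m) (q : ℝ) (hq : -1 < q)
    (u : Fin m → ℝ) (hu : ∑ j, u j ^ 2 = 1) (i : Fin m) :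
    ∫ g : Fin m → ℝ,
        |∑ j, g j * u j| ^ q * (g i) ^ 2
        ∂(Measure.pi fun _ : Fin m => gaussianReal 0 1) =
      (1 + q * u i ^ 2) * (2 ^ (q / 2) * Real.Gamma ((q + 1) / 2) / Real.sqrt Real.pi) :=
  gaussian_power_times_square_moment_general m q hq u hu i
end

section
/- Let K ⊆ ℝ^m be compact and nonempty, let α ∈ ℝ, and let f : K → ℝ be continuous with f(x) > 0 for all x ∈ K. Let (t_N) be a real sequence with t_N → 0 and t_N ≠ 0 for all N, and let h, h_1, h_2, … ∈ C(K) with ‖h_N − h‖_∞ → 0. Then sup_{x∈K} | ( (f(x) + t_N h_N(x))^α − f(x)^α ) / t_N − α f(x)^{α−1} h(x) | → 0 as N → ∞, where y^α denotes the real power. (That is, the map f ↦ f^α on (C(K), ‖·‖_∞) is Hadamard differentiable at every such f with derivative h ↦ α f^{α−1} h.) -/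
/-!
Split the difference quotient as `(g (f + t hₙ) - g f - g' f * t hₙ) / t + g' f * hₙ`.
By the mean value theorem the first term is at most `ε |hₙ|`, uniformly in `x`, because `g'` is
uniformly continuous on a compact neighbourhood of `f '' K`; the second converges uniformly to
`g' f * h` because `g' ∘ f` is bounded on `K`. For `f ↦ f ^ α` take `g = (· ^ α)` on `(0, ∞)`.
-/

open Filter Real Metric Set

theorem IsCompact.exists_pos_abs_sub_sub_deriv_mul_le {g g' : ℝ → ℝ} {U S : Set ℝ}
    (hU : IsOpen U) (hg : ∀ y ∈ U, HasDerivAt g (g' y) y) (hg' : ContinuousOn g' U)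
    (hS : IsCompact S) (hSU : S ⊆ U) {ε : ℝ} (hε : 0 < ε) :
    ∃ δ > 0, ∀ a ∈ S, ∀ u, |u| < δ → |g (a + u) - g a - g' a * u| ≤ ε * |u| := by
  obtain ⟨δ₀, hδ₀, hTU⟩ := hS.exists_cthickening_subset_open hU hSU
  obtain ⟨δ₁, hδ₁, hg'δ₁⟩ := Metric.uniformContinuousOn_iff.mp
    (hS.cthickening.uniformContinuousOn_of_continuous (hg'.mono hTU)) ε hε
  refine ⟨min δ₀ δ₁, lt_min hδ₀ hδ₁, fun a ha u hu => ?_⟩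
  have hball : closedBall a |u| ⊆ cthickening δ₀ S :=
    (closedBall_subset_closedBall (hu.le.trans (min_le_left _ _))).trans
      (closedBall_subset_cthickening ha δ₀)
  have hmvt := (convex_closedBall a |u|).norm_image_sub_le_of_norm_hasDerivWithin_le
    (f := fun z => g z - g' a * z) (f' := fun z => g' z - g' a)
    (fun z hz => (((hg z (hTU (hball hz))).sub
      ((hasDerivAt_id z).const_mul (g' a))).hasDerivWithinAt).congr_deriv (by simp))
    (fun z hz => (hg'δ₁ z (hball hz) a (hball (mem_closedBall_self (abs_nonneg u)))
      ((mem_closedBall.mp hz).trans_lt (hu.trans_le (min_le_right _ _)))).le)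
    (mem_closedBall_self (abs_nonneg u)) (y := a + u) (by simp [mem_closedBall])
  have hlin : g (a + u) - g a - g' a * u = g (a + u) - g' a * (a + u) - (g a - g' a * a) := by
    ring
  simpa [hlin] using hmvt

section DifferenceQuotient

variable {ι X : Type*} {l : Filter ι} {K : Set X} {F : ι → X → ℝ}
  {h : X → ℝ} {C : ℝ}

theorem TendstoUniformlyOn.eventually_abs_le (hF : TendstoUniformlyOn F h l K)
    (hC : ∀ x ∈ K, |h x| ≤ C) : ∀ᶠ i in l, ∀ x ∈ K, |F i x| ≤ C + 1 := by
  filter_upwards [Metric.tendstoUniformlyOn_iff.mp hF 1 one_pos] with i hi x hx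
  have hdist := hi x hx
  rw [Real.dist_eq] at hdist
  linarith [abs_sub_abs_le_abs_sub (F i x) (h x), abs_sub_comm (F i x) (h x), hC x hx]

theorem TendstoUniformlyOn.mul_left_of_abs_le {φ : X → ℝ} (hF : TendstoUniformlyOn F h l K)
    (hφ : ∀ x ∈ K, |φ x| ≤ C) :
    TendstoUniformlyOn (fun i x => φ x * F i x) (fun x => φ x * h x) l K := by
  rw [Metric.tendstoUniformlyOn_iff] at hF ⊢
  intro ε hε
  have hB : 0 < |C| + 1 := by positivity
  filter_upwards [hF (ε / (|C| + 1)) (by positivity)] with i hi x hx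
  rw [Real.dist_eq, ← mul_sub, abs_mul, ← Real.dist_eq]
  calc |φ x| * dist (h x) (F i x) ≤ (|C| + 1) * dist (h x) (F i x) := by
        gcongr; linarith [hφ x hx, le_abs_self C]
    _ < (|C| + 1) * (ε / (|C| + 1)) := by gcongr; exact hi x hx
    _ = ε := by field_simp

variable [TopologicalSpace X] {g g' : ℝ → ℝ} {U : Set ℝ} {f : X → ℝ} {t : ι → ℝ}

theorem tendstoUniformlyOn_taylor_remainder_div (hU : IsOpen U)
    (hg : ∀ y ∈ U, HasDerivAt g (g' y) y) (hg' : ContinuousOn g' U) (hK : IsCompact K)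
    (hf : ContinuousOn f K) (hfU : MapsTo f K U) (ht : Tendsto t l (nhds 0))
    (hF : TendstoUniformlyOn F h l K) (hC : ∀ x ∈ K, |h x| ≤ C) :
    TendstoUniformlyOn
      (fun i x => (g (f x + t i * F i x) - g (f x) - g' (f x) * (t i * F i x)) / t i) 0 l K := by
  rw [Metric.tendstoUniformlyOn_iff]
  intro ε hε
  set B := |C| + 1
  have hB : 0 < B := by positivity
  obtain ⟨δ, hδ, hremainder⟩ := (hK.image_of_continuousOn hf).exists_pos_abs_sub_sub_deriv_mul_le
    hU hg hg' (image_subset_iff.mpr hfU) (ε := ε / (2 * B)) (by positivity)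
  have htδ : ∀ᶠ i in l, |t i| < δ / B := by
    simpa [Real.dist_eq] using Metric.tendsto_nhds.mp ht _ (by positivity)
  filter_upwards [hF.eventually_abs_le hC, htδ] with i hFi hti x hx
  rw [Pi.zero_apply, dist_zero_left, Real.norm_eq_abs]
  rcases eq_or_ne (t i) 0 with hti0 | hti0
  · simpa [hti0] using hε
  have hs : |t i * F i x| ≤ |t i| * B := by
    rw [abs_mul]; gcongr; linarith [hFi x hx, le_abs_self C]
  have hsδ : |t i * F i x| < δ := hs.trans_lt (by rwa [lt_div_iff₀ hB] at hti)
  rw [abs_div, div_lt_iff₀ (abs_pos.mpr hti0)]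
  calc _ ≤ ε / (2 * B) * |t i * F i x| := hremainder (f x) (mem_image_of_mem f hx) _ hsδ
    _ ≤ ε / (2 * B) * (|t i| * B) := by gcongr
    _ = ε / 2 * |t i| := by field_simp
    _ < ε * |t i| := by gcongr; linarith [abs_pos.mpr hti0]

theorem tendstoUniformlyOn_difference_quotient_comp (hU : IsOpen U)
    (hg : ∀ y ∈ U, HasDerivAt g (g' y) y) (hg' : ContinuousOn g' U) (hK : IsCompact K)
    (hf : ContinuousOn f K) (hfU : MapsTo f K U) (ht : Tendsto t l (nhds 0))
    (ht0 : ∀ᶠ i in l, t i ≠ 0) (hh : ContinuousOn h K) (hF : TendstoUniformlyOn F h l K) :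
    TendstoUniformlyOn (fun i x => (g (f x + t i * F i x) - g (f x)) / t i)
      (fun x => g' (f x) * h x) l K := by
  obtain ⟨C, hC⟩ := hK.exists_bound_of_continuousOn hh
  obtain ⟨D, hD⟩ := hK.exists_bound_of_continuousOn (hg'.comp hf hfU)
  have hsum := (tendstoUniformlyOn_taylor_remainder_div hU hg hg' hK hf hfU ht hF
    (C := C) (by simpa using hC)).add (hF.mul_left_of_abs_le (C := D) (by simpa using hD))
  rw [zero_add] at hsum
  refine hsum.congr ?_
  filter_upwards [ht0] with i hti x _
  simp only [Pi.add_apply]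
  field_simp
  ring

end DifferenceQuotient

theorem hadamard_rpow_general (m : ℕ) (K : Set (EuclideanSpace ℝ (Fin m)))
    (hK : IsCompact K) (α : ℝ)
    (f : EuclideanSpace ℝ (Fin m) → ℝ) (hf : ContinuousOn f K)
    (hfpos : ∀ x ∈ K, 0 < f x)
    (t : ℕ → ℝ) (ht : Tendsto t atTop (nhds 0)) (htne : ∀ N, t N ≠ 0)
    (h : EuclideanSpace ℝ (Fin m) → ℝ) (hN : ℕ → EuclideanSpace ℝ (Fin m) → ℝ)
    (hh : ContinuousOn h K)
    (hconv : TendstoUniformlyOn hN h atTop K) :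
    TendstoUniformlyOn
      (fun N x => ((f x + t N * hN N x) ^ α - f x ^ α) / t N)
      (fun x => α * f x ^ (α - 1) * h x) atTop K := by
  have hderiv : ∀ y ∈ Ioi (0 : ℝ), HasDerivAt (· ^ α) (α * y ^ (α - 1)) y :=
    fun y hy => hasDerivAt_rpow_const (Or.inl (ne_of_gt hy))
  have hderiv_cont : ContinuousOn (fun y : ℝ => α * y ^ (α - 1)) (Ioi 0) :=
    continuousOn_const.mul (continuousOn_id.rpow_const fun y hy => Or.inl (ne_of_gt hy))
  exact tendstoUniformlyOn_difference_quotient_comp isOpen_Ioi hderiv hderiv_cont hK hf hfpos ht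
    (Eventually.of_forall htne) hh hconv

/-- Hadamard differentiability of `f ↦ f^α` on `C(K)` at any continuous
positive `f`: if `t_N → 0`, `t_N ≠ 0`, and `h_N → h` uniformly on `K`, then
`((f + t_N h_N)^α − f^α)/t_N → α f^{α−1} h` uniformly on `K`. -/
theorem hadamard_rpow (m : ℕ) (K : Set (EuclideanSpace ℝ (Fin m)))
    (hK : IsCompact K) (hKne : K.Nonempty) (α : ℝ)
    (f : EuclideanSpace ℝ (Fin m) → ℝ) (hf : ContinuousOn f K)
    (hfpos : ∀ x ∈ K, 0 < f x)
    (t : ℕ → ℝ) (ht : Tendsto t atTop (nhds 0)) (htne : ∀ N, t N ≠ 0)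
    (h : EuclideanSpace ℝ (Fin m) → ℝ) (hN : ℕ → EuclideanSpace ℝ (Fin m) → ℝ)
    (hh : ContinuousOn h K) (hhN : ∀ N, ContinuousOn (hN N) K)
    (hconv : TendstoUniformlyOn hN h atTop K) :
    TendstoUniformlyOn
      (fun N x => ((f x + t N * hN N x) ^ α - f x ^ α) / t N)
      (fun x => α * f x ^ (α - 1) * h x) atTop K :=
  hadamard_rpow_general m K hK α f hf hfpos t ht htne h hN hh hconv
end

section
/- Let m ≥ 1 and M ∈ (0,∞). For f ∈ C(S^{m−1}) define Φ(f) : S^{m−1} → ℝ by Φ(f)(x) = inf{ f(u)/⟨x,u⟩ : u ∈ S^{m−1}, ⟨u,x⟩ > 0 }. Let (t_N) be a real sequence with t_N → 0 and t_N ≠ 0 for all N, and let h, h_1, h_2, … ∈ C(S^{m−1}) with ‖h_N − h‖_∞ → 0. Then, with f̄ denoting the constant function with value M on S^{m−1}, sup_{x ∈ S^{m−1}} | ( Φ(f̄ + t_N h_N)(x) − M ) / t_N − h(x) | → 0 as N → ∞. (That is, Φ is Hadamard differentiable at every positive constant function with derivative h ↦ h.) -/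
open Filter Real
open scoped RealInnerProductSpace

set_option maxHeartbeats 1000000

/-- The map `Φ(f)(x) = inf { f(u)/⟨x,u⟩ : u ∈ S^{m−1}, ⟨u,x⟩ > 0 }`
(support function to radial function) is Hadamard differentiable at every positive constant
function `f̄ ≡ M` with derivative `h ↦ h`: if `t_N → 0`, `t_N ≠ 0` and `h_N → h` uniformly
on the sphere, then `(Φ(f̄ + t_N h_N) − M)/t_N → h` uniformly on the sphere. -/
theorem hadamard_support_to_radial (m : ℕ) (hm : 1 ≤ m) (M : ℝ) (hM : 0 < M)
    (t : ℕ → ℝ) (ht : Tendsto t atTop (nhds 0)) (htne : ∀ N, t N ≠ 0)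
    (h : EuclideanSpace ℝ (Fin m) → ℝ) (hN : ℕ → EuclideanSpace ℝ (Fin m) → ℝ)
    (hh : ContinuousOn h (Metric.sphere (0 : EuclideanSpace ℝ (Fin m)) 1))
    (hhN : ∀ N, ContinuousOn (hN N) (Metric.sphere (0 : EuclideanSpace ℝ (Fin m)) 1))
    (hconv : TendstoUniformlyOn hN h atTop (Metric.sphere (0 : EuclideanSpace ℝ (Fin m)) 1)) :
    TendstoUniformlyOn
      (fun N x =>
        (sInf {r : ℝ | ∃ u ∈ Metric.sphere (0 : EuclideanSpace ℝ (Fin m)) 1,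
            0 < ⟪u, x⟫ ∧ r = (M + t N * hN N u) / ⟪x, u⟫} - M) / t N)
      h atTop (Metric.sphere (0 : EuclideanSpace ℝ (Fin m)) 1) := by
  rw [Metric.tendstoUniformlyOn_iff]
  intro ε hε
  have hcomp : IsCompact (Metric.sphere (0 : EuclideanSpace ℝ (Fin m)) 1) :=
    isCompact_sphere 0 1
  obtain ⟨K, hK⟩ := hcomp.exists_bound_of_continuousOn hh
  set B : ℝ := max K 0 + 1 with hBdef
  have hB1 : (1:ℝ) ≤ B := by
    have : (0:ℝ) ≤ max K 0 := le_max_right _ _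
    linarith
  have hB0 : (0:ℝ) < B := lt_of_lt_of_le one_pos hB1
  have hhB : ∀ u ∈ Metric.sphere (0 : EuclideanSpace ℝ (Fin m)) 1, |h u| ≤ B - 1 := by
    intro u hu
    have h1 : ‖h u‖ ≤ K := hK u hu
    have h2 : K ≤ max K 0 := le_max_left _ _
    have : |h u| ≤ K := h1
    simp only [hBdef]
    linarith
  have hUC : UniformContinuousOn h (Metric.sphere (0 : EuclideanSpace ℝ (Fin m)) 1) :=
    hcomp.uniformContinuousOn_of_continuous hh
  obtain ⟨δ, hδ0, hδ⟩ := (Metric.uniformContinuousOn_iff).mp hUC (ε/4) (by positivity)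
  have hconv' := Metric.tendstoUniformlyOn_iff.mp hconv (min (ε/4) 1) (by positivity)
  have hcsmall : (0:ℝ) < min (M/(4*B)) (M*δ^2/(4*B)) := by positivity
  have htsmall : ∀ᶠ N in atTop, |t N| < min (M/(4*B)) (M*δ^2/(4*B)) := by
    have h1 := (Metric.tendsto_nhds.mp ht) _ hcsmall
    filter_upwards [h1] with N hn
    simpa [Real.dist_eq] using hn
  filter_upwards [hconv', htsmall] with N hN1 hN2 x hx
  set τ : ℝ := t N with hτdef
  set g : EuclideanSpace ℝ (Fin m) → ℝ := hN N with hgdef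
  have hτ0 : τ ≠ 0 := htne N
  have hτa : 0 < |τ| := abs_pos.mpr hτ0
  have hτ1 : |τ| < M/(4*B) := lt_of_lt_of_le hN2 (min_le_left _ _)
  have hτ2 : |τ| < M*δ^2/(4*B) := lt_of_lt_of_le hN2 (min_le_right _ _)
  have hτB : |τ| * B < M/4 := by
    have h1 : |τ| * (4*B) < M := (lt_div_iff₀ (by positivity)).mp hτ1
    nlinarith
  have hτδ : 4 * (|τ| * B) < M * δ^2 := by
    have h1 : |τ| * (4*B) < M*δ^2 := (lt_div_iff₀ (by positivity)).mp hτ2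
    nlinarith
  have hgB : ∀ u ∈ Metric.sphere (0 : EuclideanSpace ℝ (Fin m)) 1, |g u| ≤ B := by
    intro u hu
    have h1 := hN1 u hu
    rw [Real.dist_eq] at h1
    have h2 : |h u - g u| ≤ 1 := le_of_lt (lt_of_lt_of_le h1 (min_le_right _ _))
    have h3 := hhB u hu
    have h4 : |g u| - |h u| ≤ |g u - h u| := abs_sub_abs_le_abs_sub _ _
    rw [abs_sub_comm] at h4
    linarith
  have hgh : ∀ u ∈ Metric.sphere (0 : EuclideanSpace ℝ (Fin m)) 1, |g u - h u| ≤ ε/4 := by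
    intro u hu
    have h1 := hN1 u hu
    rw [Real.dist_eq, abs_sub_comm] at h1
    exact le_of_lt (lt_of_lt_of_le h1 (min_le_left _ _))
  have hx1 : ‖x‖ = 1 := mem_sphere_zero_iff_norm.mp hx
  have hxx : ⟪x, x⟫ = (1:ℝ) := by
    rw [real_inner_self_eq_norm_sq, hx1]; norm_num
  set S : Set ℝ := {r : ℝ | ∃ u ∈ Metric.sphere (0 : EuclideanSpace ℝ (Fin m)) 1,
      0 < ⟪u, x⟫ ∧ r = (M + τ * g u) / ⟪x, u⟫} with hSdef
  have hmem : (M + τ * g x) ∈ S := by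
    refine ⟨x, hx, by rw [hxx]; norm_num, ?_⟩
    rw [hxx, div_one]
  -- auxiliary bound: |a| ≤ s → -(|τ| * s) ≤ τ * a
  have haux : ∀ a s : ℝ, |a| ≤ s → -(|τ| * s) ≤ τ * a ∧ τ * a ≤ |τ| * s := by
    intro a s hs
    constructor
    · have h1 : -(|τ * a|) ≤ τ * a := neg_abs_le _
      have h2 : |τ * a| = |τ| * |a| := abs_mul _ _
      have h3 : |τ| * |a| ≤ |τ| * s := mul_le_mul_of_nonneg_left hs (abs_nonneg _)
      linarith
    · have h1 : τ * a ≤ |τ * a| := le_abs_self _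
      have h2 : |τ * a| = |τ| * |a| := abs_mul _ _
      have h3 : |τ| * |a| ≤ |τ| * s := mul_le_mul_of_nonneg_left hs (abs_nonneg _)
      linarith
  have hlow : ∀ r ∈ S, M + τ * h x - |τ| * (ε/2) ≤ r := by
    rintro r ⟨u, hu, hup, rfl⟩
    have hu1 : ‖u‖ = 1 := mem_sphere_zero_iff_norm.mp hu
    have hcomm : ⟪x, u⟫ = ⟪u, x⟫ := real_inner_comm u x
    obtain ⟨c, hc⟩ : ∃ c : ℝ, ⟪x, u⟫ = c := ⟨_, rfl⟩
    rw [hc]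
    have hc0 : (0:ℝ) < c := by rw [← hc, hcomm]; exact hup
    have hc1 : c ≤ 1 := by
      have := real_inner_le_norm x u
      rw [hx1, hu1, hc] at this; linarith
    have hgu := hgB u hu
    have hgx := hgB x hx
    have hτgu := haux (g u) B hgu
    have hτgx := haux (g x) B hgx
    have hnum : 0 < M + τ * g u := by nlinarith [hτgu.1]
    by_cases hcase : (M + τ * g u) / c < M + τ * g x
    · -- the minimizing regime: u must be close to x
      have hr1 : M + τ * g u ≤ (M + τ * g u) / c := by
        rw [le_div_iff₀ hc0]
        nlinarith
      have hlt : M + τ * g u < c * (M + τ * g x) := by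
        have := (div_lt_iff₀ hc0).mp hcase
        linarith [this]
      have hclose : M * (1 - c) < 2 * (|τ| * B) := by
        nlinarith [hτgx.2, hτgu.1, hc0, hc1]
      have hnsq : ‖u - x‖^2 = 2 - 2 * c := by
        rw [norm_sub_sq_real, hu1, hx1, ← hcomm, hc]; ring
      have hdsq : ‖u - x‖^2 < δ^2 := by
        rw [hnsq]
        nlinarith
      have hdlt : dist u x < δ := by
        rw [dist_eq_norm]
        nlinarith [norm_nonneg (u - x), hδ0]
      have hhux : |h u - h x| < ε/4 := by
        have := hδ u hu x hx hdlt
        rwa [Real.dist_eq] at this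
      have h5 := haux (g u - h u) (ε/4) (hgh u hu)
      have h6 := haux (h u - h x) (ε/4) (le_of_lt hhux)
      have : M + τ * h x - |τ| * (ε/2) ≤ M + τ * g u := by nlinarith [h5.1, h6.1]
      linarith
    · push_neg at hcase
      have h5 := haux (g x - h x) (ε/4) (hgh x hx)
      have : M + τ * h x - |τ| * (ε/2) ≤ M + τ * g x := by nlinarith [h5.1, hε]
      linarith
  have hbdd : BddBelow S := ⟨M + τ * h x - |τ| * (ε/2), fun r hr => hlow r hr⟩
  have hinf_le : sInf S ≤ M + τ * g x := csInf_le hbdd hmem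
  have hle_inf : M + τ * h x - |τ| * (ε/2) ≤ sInf S := le_csInf ⟨_, hmem⟩ hlow
  have h5 := haux (g x - h x) (ε/4) (hgh x hx)
  have hup2 : sInf S - M - τ * h x ≤ |τ| * (ε/2) := by nlinarith [h5.2, hε]
  have hdn2 : -(|τ| * (ε/2)) ≤ sInf S - M - τ * h x := by linarith
  have habs : |sInf S - M - τ * h x| ≤ |τ| * (ε/2) := abs_le.mpr ⟨hdn2, hup2⟩
  rw [Real.dist_eq]
  have hkey : h x - (sInf S - M) / τ = -((sInf S - M - τ * h x) / τ) := by
    field_simp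
    ring
  rw [hkey, abs_neg, abs_div]
  rw [div_lt_iff₀ hτa]
  nlinarith
end
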